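/- Let n ≥ 1, A an n×n complex matrix, x, y ∈ ℂⁿ, and for j ≥ 0 let α_j(A) denote the coefficient of τ^j in G_{x,y}(A). Then for every integer m ≥ 1, the function ℂ → ℂ given by s ↦ α_m(A + s·I) is differentiable at 0 and its derivative at s = 0 equals (n+m)·α_{m−1}(A). (The identity ∂α_m/∂I_n = (n+m)·α_{m−1} used in the proof of Lemma 1.2(b).) -/

import Mathlib

/-!
With `w = 1 - sτ` and `u = τ / w` one has `I - τ(A + sI) = w • (I - uA)`, hence
`G(A + sI)(τ) = w⁻ⁿ⁻¹ · G(A)(u)`. Since `u^k = τ^k w⁻ᵏ` and the coefficients of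
`w^{-(r+1)}` are `C(r+j, r) sʲ`, this gives `α_m(A + sI) = Σ_{j ≤ m} C(n+m, j) α_{m-j}(A) sʲ`,
a polynomial in `s` whose linear coefficient is `(n+m) α_{m-1}(A)`.
-/

/-- The generating series `G_{x,y}(B) = (Σ_{i,j} x_i ((I − τB)^{-1})_{i,j} y_j) · det(I − τB)^{-1}`
in `ℂ[[τ]]`.  Here `(I − τB)⁻¹` is the matrix inverse over `ℂ[[τ]]` (which is the genuine
two-sided inverse, since `det(I − τB)` has constant term `1`, hence is a unit), and the last
factor uses the power series inverse. -/
noncomputable def genG {n : ℕ} (x y : Fin n → ℂ) (B : Matrix (Fin n) (Fin n) ℂ) :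
    PowerSeries ℂ :=
  (∑ i, ∑ j, (PowerSeries.C (R := ℂ)) (x i) *
      (((1 - (PowerSeries.X : PowerSeries ℂ) • B.map ((PowerSeries.C (R := ℂ))) : Matrix (Fin n) (Fin n) (PowerSeries ℂ))⁻¹) i j) * (PowerSeries.C (R := ℂ)) (y j)) *
    ((1 - (PowerSeries.X : PowerSeries ℂ) • B.map ((PowerSeries.C (R := ℂ)))).det)⁻¹


open PowerSeries Finset

namespace PowerSeries

section Field

variable {K : Type*} [Field K]

theorem inv_pow (φ : K⟦X⟧) (n : ℕ) : φ⁻¹ ^ n = (φ ^ n)⁻¹ := by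
  by_cases hφ : constantCoeff φ = 0
  · rcases n.eq_zero_or_pos with rfl | hn
    · simp
    · have hφn : constantCoeff (φ ^ n) = 0 := by rw [map_pow, hφ, zero_pow hn.ne']
      rw [inv_eq_zero.mpr hφ, zero_pow hn.ne', inv_eq_zero.mpr hφn]
  · refine ((inv_eq_iff_mul_eq_one (by simpa using pow_ne_zero n hφ)).mpr ?_).symm
    rw [← mul_pow, PowerSeries.inv_mul_cancel _ hφ, one_pow]

theorem map_inv_of_isUnit {L : Type*} [Field L] (f : K⟦X⟧ →+* L⟦X⟧) {φ : K⟦X⟧}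
    (hφ : IsUnit φ) : f φ⁻¹ = (f φ)⁻¹ := by
  have hφ₀ : constantCoeff φ ≠ 0 := (isUnit_iff_constantCoeff.mp hφ).ne_zero
  have hfφ₀ : constantCoeff (f φ) ≠ 0 := (isUnit_iff_constantCoeff.mp (hφ.map f)).ne_zero
  refine ((inv_eq_iff_mul_eq_one hfφ₀).mpr ?_).symm
  rw [← map_mul, PowerSeries.inv_mul_cancel _ hφ₀, map_one]

theorem inv_one_sub_C_mul_X (s : K) : (1 - C s * X)⁻¹ = rescale s (mk 1) := by
  refine (inv_eq_iff_mul_eq_one (by simp)).mpr ?_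
  rw [← rescale_X, ← map_one (rescale s), ← map_sub, ← map_mul, mk_one_mul_one_sub_eq_one,
    map_one]

theorem coeff_inv_one_sub_C_mul_X_pow (s : K) (r j : ℕ) :
    coeff j ((1 - C s * X)⁻¹ ^ (r + 1)) = (r + j).choose r * s ^ j := by
  rw [inv_one_sub_C_mul_X, ← map_pow, mk_one_pow_eq_mk_choose_add, coeff_rescale, coeff_mk,
    mul_comm]

end Field

theorem coeff_mul_subst {R : Type*} [CommRing R] {u : R⟦X⟧} (hu : constantCoeff u = 0)
    (P G : R⟦X⟧) (m : ℕ) :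
    coeff m (P * G.subst u) = ∑ k ∈ range (m + 1), coeff k G * coeff m (P * u ^ k) := by
  have hu' : HasSubst u := HasSubst.of_constantCoeff_zero' hu
  have htail : ∀ H : R⟦X⟧, coeff m (P * (u ^ (m + 1) * H)) = 0 := by
    intro H
    have hX : X ^ (m + 1) ∣ P * (u ^ (m + 1) * H) :=
      ((pow_dvd_pow_of_dvd (X_dvd_iff.mpr hu) _).mul_right H).mul_left P
    exact X_pow_dvd_iff.mp hX m m.lt_succ_self
  conv_lhs => rw [eq_X_pow_mul_shift_add_trunc (m + 1) G]
  rw [subst_add hu', subst_mul hu', subst_pow hu', subst_X hu', subst_coe hu',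
    Polynomial.aeval_eq_sum_range' (natDegree_trunc_lt G m), mul_add, map_add, htail, zero_add,
    mul_sum, map_sum]
  refine sum_congr rfl fun k hk => ?_
  rw [mul_smul_comm, coeff_smul, coeff_trunc, if_pos (mem_range.mp hk), smul_eq_mul]

theorem algHom_apply_C {R : Type*} [CommSemiring R] (f : R⟦X⟧ →ₐ[R] R⟦X⟧) (c : R) :
    f (C c) = C c := by
  simpa using f.commutes c

end PowerSeries

theorem RingHom.mapMatrix_nonsing_inv {ι R S : Type*} [Fintype ι] [DecidableEq ι] [CommRing R]
    [CommRing S] (f : R →+* S) {M : Matrix ι ι R} (hM : IsUnit M.det) :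
    (f.mapMatrix M)⁻¹ = f.mapMatrix M⁻¹ :=
  Matrix.inv_eq_right_inv (by rw [← map_mul, M.mul_nonsing_inv hM, map_one])

theorem Matrix.isUnit_det_one_sub_smul {ι R : Type*} [Fintype ι] [DecidableEq ι] [CommRing R]
    {t : R⟦X⟧} (ht : constantCoeff t = 0) (N : Matrix ι ι R⟦X⟧) :
    IsUnit (1 - t • N).det := by
  have h : (constantCoeff (R := R)).mapMatrix (1 - t • N) = 1 := by
    ext i j
    simp [Matrix.one_apply, ht, apply_ite (constantCoeff (R := R))]
  rw [isUnit_iff_constantCoeff, RingHom.map_det, h, Matrix.det_one]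
  exact isUnit_one

section BilinInvDivDet

variable {K ι : Type*} [Field K] [Fintype ι] [DecidableEq ι]

noncomputable def bilinInvDivDet (x y : ι → K) (M : Matrix ι ι K⟦X⟧) : K⟦X⟧ :=
  (∑ i, ∑ j, C (x i) * M⁻¹ i j * C (y j)) * M.det⁻¹

theorem map_bilinInvDivDet (f : K⟦X⟧ →ₐ[K] K⟦X⟧) (x y : ι → K) {M : Matrix ι ι K⟦X⟧}
    (hM : IsUnit M.det) :
    f (bilinInvDivDet x y M) = bilinInvDivDet x y (f.toRingHom.mapMatrix M) := by
  simp only [bilinInvDivDet, map_mul, map_sum, algHom_apply_C]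
  rw [RingHom.mapMatrix_nonsing_inv _ hM, ← RingHom.map_det, ← map_inv_of_isUnit _ hM]
  rfl

theorem bilinInvDivDet_smul (x y : ι → K) {w : K⟦X⟧} (hw : constantCoeff w ≠ 0)
    {M : Matrix ι ι K⟦X⟧} (hM : IsUnit M.det) :
    bilinInvDivDet x y (w • M) = w⁻¹ ^ (Fintype.card ι + 1) * bilinInvDivDet x y M := by
  have hinv : (w • M)⁻¹ = w⁻¹ • M⁻¹ := by
    refine Matrix.inv_eq_right_inv ?_
    rw [Matrix.smul_mul, Matrix.mul_smul, smul_smul, PowerSeries.mul_inv_cancel _ hw,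
      M.mul_nonsing_inv hM, one_smul]
  simp only [bilinInvDivDet, hinv, Matrix.det_smul, PowerSeries.mul_inv_rev,
    ← PowerSeries.inv_pow, Matrix.smul_apply, smul_eq_mul, mul_sum, sum_mul]
  exact sum_congr rfl fun i _ => sum_congr rfl fun j _ => by ring

end BilinInvDivDet

theorem genG_eq_bilinInvDivDet {n : ℕ} (x y : Fin n → ℂ) (B : Matrix (Fin n) (Fin n) ℂ) :
    genG x y B = bilinInvDivDet x y (1 - (X : ℂ⟦X⟧) • B.map (C (R := ℂ))) :=
  rfl

theorem one_sub_X_smul_map_add_smul_one {K ι : Type*} [Field K] [Fintype ι] [DecidableEq ι]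
    (A : Matrix ι ι K) (s : K) :
    (1 - (X : K⟦X⟧) • (A + s • 1).map (C (R := K)) : Matrix ι ι K⟦X⟧) =
      (1 - C s * X) • (1 - (X * (1 - C s * X)⁻¹) • A.map (C (R := K))) := by
  have hw : (1 - C s * X) * (1 - C s * X)⁻¹ = 1 := PowerSeries.mul_inv_cancel _ (by simp)
  have hmap : (A + s • 1).map (C (R := K)) = A.map C + C s • 1 := by
    refine Matrix.ext fun i j => ?_
    simp [Matrix.one_apply, apply_ite (C (R := K))]
  rw [smul_sub, smul_smul, mul_left_comm, hw, mul_one, hmap, smul_add, smul_smul, sub_smul,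
    one_smul, mul_comm X]
  abel

theorem genG_add_smul_one {n : ℕ} (x y : Fin n → ℂ) (A : Matrix (Fin n) (Fin n) ℂ) (s : ℂ) :
    genG x y (A + s • 1) =
      (1 - C s * X)⁻¹ ^ (n + 1) * (genG x y A).subst (X * (1 - C s * X)⁻¹) := by
  set u : ℂ⟦X⟧ := X * (1 - C s * X)⁻¹
  have hu₀ : constantCoeff u = 0 := by simp [u]
  have hu : HasSubst u := HasSubst.of_constantCoeff_zero' hu₀
  have hsubst : (substAlgHom hu).toRingHom.mapMatrix (1 - (X : ℂ⟦X⟧) • A.map (C (R := ℂ))) =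
      1 - u • A.map (C (R := ℂ)) := by
    refine Matrix.ext fun i j => ?_
    simp [Matrix.one_apply, apply_ite (substAlgHom hu), substAlgHom_X, algHom_apply_C]
  rw [genG_eq_bilinInvDivDet, genG_eq_bilinInvDivDet, one_sub_X_smul_map_add_smul_one,
    bilinInvDivDet_smul _ _ (by simp) (Matrix.isUnit_det_one_sub_smul hu₀ _), ← hsubst,
    ← map_bilinInvDivDet _ _ _ (Matrix.isUnit_det_one_sub_smul constantCoeff_X _),
    coe_substAlgHom, Fintype.card_fin]

theorem coeff_genG_add_smul_one {n : ℕ} (x y : Fin n → ℂ) (A : Matrix (Fin n) (Fin n) ℂ)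
    (m : ℕ) (s : ℂ) :
    coeff m (genG x y (A + s • 1)) =
      ∑ j ∈ range (m + 1), (n + m).choose j * coeff (m - j) (genG x y A) * s ^ j := by
  set V : ℂ⟦X⟧ := (1 - C s * X)⁻¹
  have hu₀ : constantCoeff (X * V) = 0 := by simp
  rw [genG_add_smul_one, coeff_mul_subst hu₀, ← sum_range_reflect]
  refine sum_congr rfl fun j hj => ?_
  have hjm : j ≤ m := Nat.lt_succ_iff.mp (mem_range.mp hj)
  have hpow : V ^ (n + 1) * (X * V) ^ (m - j) = X ^ (m - j) * V ^ (n + (m - j) + 1) := by ring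
  rw [Nat.add_sub_cancel, hpow, coeff_X_pow_mul', if_pos (Nat.sub_le m j),
    Nat.sub_sub_self hjm,
    coeff_inv_one_sub_C_mul_X_pow, show n + (m - j) + j = n + m by omega,
    Nat.choose_symm_of_eq_add (show n + m = n + (m - j) + j by omega)]
  ring

theorem hasDerivAt_sum_mul_pow_zero {𝕜 : Type*} [NontriviallyNormedField 𝕜] (c : ℕ → 𝕜)
    {N : ℕ} (hN : 1 < N) : HasDerivAt (fun s => ∑ j ∈ range N, c j * s ^ j) (c 1) 0 := by
  have h := HasDerivAt.fun_sum (u := range N) fun j _ =>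
    (hasDerivAt_pow j (0 : 𝕜)).const_mul (c j)
  refine h.congr_deriv ?_
  have hvanish : ∀ j ∈ range N, j ≠ 1 → c j * (j * (0 : 𝕜) ^ (j - 1)) = 0 := by
    intro j _ hj
    rcases Nat.lt_or_gt_of_ne hj with hj | hj
    · simp [Nat.lt_one_iff.mp hj]
    · simp [zero_pow (by omega : j - 1 ≠ 0)]
  rw [sum_eq_single 1 hvanish (by simp [hN])]
  simp

theorem alpha_deriv_general (n : ℕ) (A : Matrix (Fin n) (Fin n) ℂ)
    (x y : Fin n → ℂ) (m : ℕ) (hm : 1 ≤ m) :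
    HasDerivAt (fun s : ℂ => PowerSeries.coeff (R := ℂ) m (genG x y (A + s • 1)))
      ((n + m : ℂ) * PowerSeries.coeff (R := ℂ) (m - 1) (genG x y A)) 0 := by
  simp_rw [coeff_genG_add_smul_one]
  refine (hasDerivAt_sum_mul_pow_zero
    (fun j => ((n + m).choose j : ℂ) * coeff (m - j) (genG x y A)) (by omega)).congr_deriv ?_
  simp [Nat.choose_one_right]

theorem alpha_deriv (n : ℕ) (hn : 1 ≤ n) (A : Matrix (Fin n) (Fin n) ℂ)
    (x y : Fin n → ℂ) (m : ℕ) (hm : 1 ≤ m) :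
    HasDerivAt (fun s : ℂ => PowerSeries.coeff (R := ℂ) m (genG x y (A + s • 1)))
      ((n + m : ℂ) * PowerSeries.coeff (R := ℂ) (m - 1) (genG x y A)) 0 :=
  alpha_deriv_general n A x y m hm
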